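/- arXiv:1712.06473 — 6 statements merged into one kernel-verified Lean document; each statement's English description precedes it below -/
import Mathlib

section
/- Let ε ∈ (0,1) and let A, B be symmetric real n×n matrices with A positive semidefinite, such that for every x ∈ ℝⁿ, (1−ε)·(x ⬝ᵥ A.mulVec x) ≤ x ⬝ᵥ B.mulVec x ≤ (1+ε)·(x ⬝ᵥ A.mulVec x). Then for every d, x, y ∈ ℝⁿ with A.mulVec x = d and B.mulVec y = d, it holds that (1/(1+ε))·(d ⬝ᵥ x) ≤ d ⬝ᵥ y ≤ (1/(1−ε))·(d ⬝ᵥ x). (Spectral closeness of two positive semidefinite matrices implies closeness of the quadratic forms of their pseudoinverses on the common range; in particular, every (1±ε)-spectral sparsifier is a (1±ε)-resistance sparsifier: taking d = χ_{s,t}, the quantities d ⬝ᵥ x and d ⬝ᵥ y are the effective s–t resistances of the two graphs.) -/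
open Matrix BigOperators

lemma symm_dot {n : ℕ} (M : Matrix (Fin n) (Fin n) ℝ) (hs : M.IsSymm)
    (u v : Fin n → ℝ) : u ⬝ᵥ M.mulVec v = v ⬝ᵥ M.mulVec u := by
  rw [Matrix.dotProduct_mulVec, ← Matrix.mulVec_transpose, hs.eq, dotProduct_comm]

lemma psd_cs {n : ℕ} (M : Matrix (Fin n) (Fin n) ℝ) (hs : M.IsSymm)
    (hpsd : ∀ v : Fin n → ℝ, 0 ≤ v ⬝ᵥ M.mulVec v) (x y : Fin n → ℝ) :
    (x ⬝ᵥ M.mulVec y) ^ 2 ≤ (x ⬝ᵥ M.mulVec x) * (y ⬝ᵥ M.mulVec y) := by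
  have key : ∀ t : ℝ, 0 ≤ (y ⬝ᵥ M.mulVec y) * (t * t) + (2 * (x ⬝ᵥ M.mulVec y)) * t
      + (x ⬝ᵥ M.mulVec x) := by
    intro t
    have h := hpsd (x + t • y)
    have hexp : (x + t • y) ⬝ᵥ M.mulVec (x + t • y)
        = (y ⬝ᵥ M.mulVec y) * (t * t) + (2 * (x ⬝ᵥ M.mulVec y)) * t + (x ⬝ᵥ M.mulVec x) := by
      rw [Matrix.mulVec_add, Matrix.mulVec_smul, add_dotProduct,
        smul_dotProduct, dotProduct_add, dotProduct_add,
        dotProduct_smul, dotProduct_smul,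
        symm_dot M hs y x]
      simp [smul_eq_mul]
      ring
    linarith [hexp ▸ h]
  have hd := discrim_le_zero key
  rw [discrim] at hd
  nlinarith [hd]

theorem spectral_sparsifier_is_resistance_sparsifier
    {n : ℕ} (ε : ℝ) (hε : ε ∈ Set.Ioo (0 : ℝ) 1)
    (A B : Matrix (Fin n) (Fin n) ℝ)
    (hAsymm : A.IsSymm) (hBsymm : B.IsSymm)
    (hApsd : ∀ x : Fin n → ℝ, 0 ≤ x ⬝ᵥ A.mulVec x)
    (hclose : ∀ x : Fin n → ℝ,
      (1 - ε) * (x ⬝ᵥ A.mulVec x) ≤ x ⬝ᵥ B.mulVec x ∧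
      x ⬝ᵥ B.mulVec x ≤ (1 + ε) * (x ⬝ᵥ A.mulVec x)) :
    ∀ d x y : Fin n → ℝ, A.mulVec x = d → B.mulVec y = d →
      (1 / (1 + ε)) * (d ⬝ᵥ x) ≤ d ⬝ᵥ y ∧
      d ⬝ᵥ y ≤ (1 / (1 - ε)) * (d ⬝ᵥ x) := by
  obtain ⟨hε0, hε1⟩ := hε
  have hBpsd : ∀ v : Fin n → ℝ, 0 ≤ v ⬝ᵥ B.mulVec v := fun v => by
    have := (hclose v).1
    nlinarith [hApsd v]
  intro d x y hx hy
  have hdx : d ⬝ᵥ x = x ⬝ᵥ A.mulVec x := by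
    rw [← hx, dotProduct_comm]
  have hdy : d ⬝ᵥ y = y ⬝ᵥ B.mulVec y := by
    rw [← hy, dotProduct_comm]
  have hdyA : d ⬝ᵥ y = x ⬝ᵥ A.mulVec y := by
    rw [← hx, dotProduct_comm, symm_dot A hAsymm y x]
  have hdxB : d ⬝ᵥ x = y ⬝ᵥ B.mulVec x := by
    rw [← hy, dotProduct_comm, symm_dot B hBsymm x y]
  have hAx := hApsd x
  have hAy := hApsd y
  have hBy := hBpsd y
  have hBx := hBpsd x
  constructor
  · -- (1/(1+ε)) * d⬝x ≤ d⬝y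
    have hcsB := psd_cs B hBsymm hBpsd y x
    have hBxle := (hclose x).2
    rw [← hdxB] at hcsB
    -- (d⬝x)^2 ≤ (y⬝By)(x⬝Bx) ≤ (d⬝y)(1+ε)(x⬝Ax) = (1+ε)(d⬝y)(d⬝x)
    rw [div_mul_eq_mul_div, div_le_iff₀ (by linarith)]
    rcases le_or_gt (d ⬝ᵥ x) 0 with h | h
    · nlinarith
    · nlinarith
  · have hcsA := psd_cs A hAsymm hApsd x y
    have hAyle := (hclose y).1
    rw [← hdyA] at hcsA
    rw [div_mul_eq_mul_div, le_div_iff₀ (by linarith)]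
    rcases le_or_gt (d ⬝ᵥ y) 0 with h | h
    · nlinarith
    · nlinarith
end

section
/- Let N and K be finite types, let L_N be a symmetric invertible real N×N matrix, L_M a real N×K matrix, and L_K a symmetric real K×K matrix, and let L be the block matrix fromBlocks L_N L_M L_Mᵀ L_K over the index type N ⊕ K. Let S := L_K − L_Mᵀ * L_N⁻¹ * L_M be the Schur complement with respect to K. Fix distinct terminals s, t ∈ K and let χ : K → ℝ be the vector with χ(s) = 1, χ(t) = −1 and χ(k) = 0 otherwise. Suppose φ : N ⊕ K → ℝ satisfies L.mulVec φ = Sum.elim 0 χ and ψ : K → ℝ satisfies S.mulVec ψ = χ. Then χ ⬝ᵥ ψ = χ ⬝ᵥ φ_K, where φ_K is the restriction of φ to K. (Lemma 3.4 of the paper: the graph associated with the Schur complement is an exact (quality-1) vertex resistance sparsifier, i.e., the effective s–t resistance between any two terminals is the same in the original graph and in its Schur complement.) -/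
open Matrix BigOperators

theorem schur_complement_exact_resistance_sparsifier
    {N K : Type*} [Fintype N] [Fintype K] [DecidableEq N] [DecidableEq K]
    (L_N : Matrix N N ℝ) (L_M : Matrix N K ℝ) (L_K : Matrix K K ℝ)
    (hNsymm : L_N.IsSymm) (hKsymm : L_K.IsSymm)
    (hinv : IsUnit L_N.det)
    (s t : K) (hst : s ≠ t)
    (χ : K → ℝ)
    (hχ : χ = fun k => if k = s then (1 : ℝ) else if k = t then (-1 : ℝ) else 0)
    (φ : N ⊕ K → ℝ)
    (hφ : (Matrix.fromBlocks L_N L_M L_Mᵀ L_K).mulVec φ = Sum.elim (0 : N → ℝ) χ)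
    (ψ : K → ℝ)
    (hψ : (L_K - L_Mᵀ * L_N⁻¹ * L_M).mulVec ψ = χ) :
    χ ⬝ᵥ ψ = χ ⬝ᵥ (φ ∘ Sum.inr) := by
  set S : Matrix K K ℝ := L_K - L_Mᵀ * L_N⁻¹ * L_M with hS
  set φN : N → ℝ := φ ∘ Sum.inl with hφN
  set φK : K → ℝ := φ ∘ Sum.inr with hφK
  have hφ' : (Matrix.fromBlocks L_N L_M L_Mᵀ L_K).mulVec (Sum.elim φN φK)
      = Sum.elim (0 : N → ℝ) χ := by
    rw [hφN, hφK, Sum.elim_comp_inl_inr]; exact hφ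
  rw [Matrix.fromBlocks_mulVec] at hφ'
  have hN : L_N.mulVec φN + L_M.mulVec φK = 0 := by
    funext n; exact congrFun hφ' (Sum.inl n)
  have hK : L_Mᵀ.mulVec φN + L_K.mulVec φK = χ := by
    funext k; exact congrFun hφ' (Sum.inr k)
  have hφNeq : φN = L_N⁻¹.mulVec (-(L_M.mulVec φK)) := by
    have h1 : L_N.mulVec φN = -(L_M.mulVec φK) := by
      rw [eq_neg_iff_add_eq_zero]; exact hN
    calc φN = (L_N⁻¹ * L_N).mulVec φN := by
          rw [Matrix.nonsing_inv_mul _ hinv, Matrix.one_mulVec]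
      _ = L_N⁻¹.mulVec (L_N.mulVec φN) := by rw [Matrix.mulVec_mulVec]
      _ = L_N⁻¹.mulVec (-(L_M.mulVec φK)) := by rw [h1]
  have hSφK : S.mulVec φK = χ := by
    rw [hS, Matrix.sub_mulVec]
    have : (L_Mᵀ * L_N⁻¹ * L_M).mulVec φK = -(L_Mᵀ.mulVec φN) := by
      rw [hφNeq]
      simp [Matrix.mulVec_mulVec, Matrix.mulVec_neg, Matrix.mul_assoc]
    rw [this]
    rw [← hK]; ring_nf
  have hSsymm : Sᵀ = S := by
    rw [hS]
    have hNinv : (L_N⁻¹)ᵀ = L_N⁻¹ := by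
      rw [Matrix.transpose_nonsing_inv, Matrix.IsSymm.eq hNsymm]
    simp [Matrix.transpose_sub, Matrix.transpose_mul, Matrix.IsSymm.eq hKsymm,
      hNinv, Matrix.mul_assoc]
  calc χ ⬝ᵥ ψ = (S.mulVec φK) ⬝ᵥ ψ := by rw [hSφK]
    _ = φK ⬝ᵥ (Sᵀ.mulVec ψ) := by
        rw [Matrix.dotProduct_mulVec, Matrix.vecMul_transpose, dotProduct_comm]
    _ = φK ⬝ᵥ χ := by rw [hSsymm, hψ]
    _ = χ ⬝ᵥ (φ ∘ Sum.inr) := by rw [dotProduct_comm, hφK]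
end

section
/- Let N and K be finite types, let L_N be an invertible real N×N matrix, L_M a real N×K matrix, and L_K a real K×K matrix, and let L := fromBlocks L_N L_M L_Mᵀ L_K over the index type N ⊕ K. If L.mulVec 1 = 0 (where 1 is the all-ones vector on N ⊕ K), then the Schur complement S := L_K − L_Mᵀ * L_N⁻¹ * L_M satisfies S.mulVec 1 = 0 (where 1 is the all-ones vector on K). (The Schur complement of a Laplacian matrix again has all row sums zero; this is the row-sum part of the fact, used in the paper, that the Schur complement of a graph Laplacian is itself a graph Laplacian.) -/
open Matrix BigOperators

theorem schur_complement_row_sums_zero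
    {N K : Type*} [Fintype N] [Fintype K] [DecidableEq N] [DecidableEq K]
    (L_N : Matrix N N ℝ) (L_M : Matrix N K ℝ) (L_K : Matrix K K ℝ)
    (hinv : IsUnit L_N.det)
    (h1 : (Matrix.fromBlocks L_N L_M L_Mᵀ L_K).mulVec (1 : N ⊕ K → ℝ) = 0) :
    (L_K - L_Mᵀ * L_N⁻¹ * L_M).mulVec (1 : K → ℝ) = 0 := by
  rw [Matrix.fromBlocks_mulVec] at h1
  have hN : L_N.mulVec 1 + L_M.mulVec 1 = 0 := by
    funext i; have := congrFun h1 (Sum.inl i)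
    simpa using this
  have hK : L_Mᵀ.mulVec 1 + L_K.mulVec 1 = 0 := by
    funext i; have := congrFun h1 (Sum.inr i)
    simpa using this
  have hM : L_M.mulVec 1 = L_N.mulVec (-1) := by
    have : L_M.mulVec 1 = -(L_N.mulVec 1) := by linear_combination (norm := module) hN
    rw [this, ← Matrix.mulVec_neg]
  have hinvM : (L_N⁻¹ * L_M).mulVec 1 = (-1 : N → ℝ) := by
    rw [← Matrix.mulVec_mulVec, hM, Matrix.mulVec_mulVec,
      Matrix.nonsing_inv_mul _ hinv, Matrix.one_mulVec]
  have : (L_Mᵀ * L_N⁻¹ * L_M).mulVec 1 = -(L_Mᵀ.mulVec 1) := by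
    rw [Matrix.mul_assoc, ← Matrix.mulVec_mulVec, hinvM, Matrix.mulVec_neg,
      Matrix.mulVec_one]
  rw [Matrix.sub_mulVec, this]
  linear_combination (norm := module) hK
end

section
/- Let V be a finite type and I a finite index set. For each i ∈ I let N_i ⊆ V be subsets that are pairwise disjoint, and let L_i be a real V×V matrix such that for every j ≠ i, every entry of L_i in a row or column indexed by an element of N_j is zero. Let N := ⋃_{i∈I} N_i and K := V \ N, and let L := ∑_{i∈I} L_i. Assume that for each i, the principal submatrix of L_i indexed by N_i (i.e., L_i.submatrix restricted to N_i × N_i) is invertible. Then the principal submatrix L[N,N] of L indexed by N is invertible, and the Schur complement of L eliminating N satisfies L[K,K] − L[K,N] * (L[N,N])⁻¹ * L[N,K] = ∑_{i∈I} ( L_i[K,K] − L_i[K,N_i] * (L_i[N_i,N_i])⁻¹ * L_i[N_i,K] ), where for a matrix M and subsets X, Y ⊆ V, M[X,Y] denotes the submatrix of M with rows indexed by X and columns indexed by Y (the matrix L_i[K,K] − L_i[K,N_i] * (L_i[N_i,N_i])⁻¹ * L_i[N_i,K] being the K×K matrix obtained by the Schur complement of L_i eliminating only its own interior N_i). (Lemma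 3.6 of the paper, in matrix form: if a graph is edge-partitioned into regions whose interior vertex sets N_i are private to each region, then the Schur complement of the whole graph onto the boundary vertices K equals the union (sum) of the Schur complements of the individual regions onto their own boundaries.) -/
/-!
Reindex the interior `N` as `Σ i, N_i`. Since `N_i` is seen only by `L_i`, the block `L[N,N]`
becomes block diagonal with blocks `L_i[N_i,N_i]`, so its inverse is block diagonal with the
inverse blocks, and `L[K,N_i] = L_i[K,N_i]`, `L[N_i,K] = L_i[N_i,K]`. The product
`L[K,N] L[N,N]⁻¹ L[N,K]` therefore splits block by block into the regional terms.
-/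

open Matrix BigOperators

/-- The submatrix of `M` with rows indexed by `X` and columns indexed by `Y`. -/
def Matrix.subBlock {V : Type*} (M : Matrix V V ℝ) (X Y : Finset V) :
    Matrix X Y ℝ :=
  M.submatrix (fun x : X => (x : V)) (fun y : Y => (y : V))

namespace Matrix

variable {ι R m p : Type*} {d : ι → Type*}

theorem mul_blockDiagonal'_mul [Fintype ι] [DecidableEq ι] [∀ i, Fintype (d i)]
    [NonUnitalNonAssocSemiring R] (X : Matrix m (Σ i, d i) R) (D : ∀ i, Matrix (d i) (d i) R)
    (Y : Matrix (Σ i, d i) p R) :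
    X * blockDiagonal' D * Y =
      ∑ i, X.submatrix id (Sigma.mk i) * D i * Y.submatrix (Sigma.mk i) id := by
  ext u v
  simp [mul_apply, blockDiagonal'_apply, sum_apply, Fintype.sum_sigma]

section Inverse

variable [Fintype ι] [DecidableEq ι] [∀ i, Fintype (d i)] [∀ i, DecidableEq (d i)] [CommRing R]

theorem blockDiagonal'_inv_mul_blockDiagonal' (A : ∀ i, Matrix (d i) (d i) R)
    (hA : ∀ i, IsUnit (A i).det) :
    blockDiagonal' (fun i => (A i)⁻¹) * blockDiagonal' A = 1 := by
  rw [← blockDiagonal'_mul]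
  simp_rw [nonsing_inv_mul _ (hA _)]
  exact blockDiagonal'_one

theorem isUnit_det_blockDiagonal' (A : ∀ i, Matrix (d i) (d i) R) (hA : ∀ i, IsUnit (A i).det) :
    IsUnit (blockDiagonal' A).det :=
  isUnit_det_of_left_inverse (blockDiagonal'_inv_mul_blockDiagonal' A hA)

theorem inv_blockDiagonal' (A : ∀ i, Matrix (d i) (d i) R) (hA : ∀ i, IsUnit (A i).det) :
    (blockDiagonal' A)⁻¹ = blockDiagonal' fun i => (A i)⁻¹ :=
  inv_eq_left_inv (blockDiagonal'_inv_mul_blockDiagonal' A hA)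

end Inverse

theorem submatrix_mul_inv_mul_submatrix {n n' : Type*} [Fintype n] [DecidableEq n] [Fintype n']
    [DecidableEq n'] [CommRing R] (A : Matrix m n R) (M : Matrix n n R) (B : Matrix n p R)
    (e : n' ≃ n) :
    A.submatrix id e * (M.submatrix e e)⁻¹ * B.submatrix e id = A * M⁻¹ * B := by
  rw [inv_submatrix_equiv, submatrix_mul_equiv, submatrix_mul_equiv, submatrix_id_id]

theorem subBlock_sum {V : Type*} (s : Finset ι) (M : ι → Matrix V V ℝ) (X Y : Finset V) :
    (∑ i ∈ s, M i).subBlock X Y = ∑ i ∈ s, (M i).subBlock X Y := by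
  ext u v
  simp [subBlock, sum_apply]

end Matrix

open Function in
noncomputable def Finset.sigmaEquivBiUnion {ι α : Type*} [Fintype ι] [DecidableEq α]
    (t : ι → Finset α) (h : Pairwise (Disjoint on t)) : (Σ i, t i) ≃ univ.biUnion t :=
  Equiv.ofBijective (fun x => ⟨x.2, mem_biUnion.2 ⟨x.1, mem_univ _, x.2.2⟩⟩) <| by
    refine ⟨fun ⟨i, a⟩ ⟨j, b⟩ hab => ?_, fun ⟨a, ha⟩ => ?_⟩
    · have hab : (a : α) = b := congrArg Subtype.val hab
      have hij : i = j := by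
        by_contra hij
        exact disjoint_left.1 (h hij) a.2 (hab ▸ b.2)
      exact Sigma.subtype_ext hij hab
    · obtain ⟨i, -, hi⟩ := mem_biUnion.1 ha
      exact ⟨⟨i, a, hi⟩, rfl⟩

def HasPrivateInteriors {I V R : Type*} [Zero R] (Nf : I → Finset V) (L : I → Matrix V V R) :
    Prop :=
  ∀ i j : I, j ≠ i → ∀ u v : V, (u ∈ Nf j ∨ v ∈ Nf j) → L i u v = 0

namespace HasPrivateInteriors

variable {I V : Type*} [Fintype I] {Nf : I → Finset V}

theorem sum_apply_eq {R : Type*} [AddCommMonoid R] {L : I → Matrix V V R}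
    (hL : HasPrivateInteriors Nf L) {i : I} {u v : V} (h : u ∈ Nf i ∨ v ∈ Nf i) :
    (∑ j, L j) u v = L i u v := by
  rw [Matrix.sum_apply]
  exact Finset.sum_eq_single i (fun j _ hj => hL j i hj.symm u v h) (by simp)

theorem sum_apply_eq_zero {R : Type*} [AddCommMonoid R] {L : I → Matrix V V R}
    (hL : HasPrivateInteriors Nf L) {i j : I} (hij : i ≠ j) {u v : V} (hu : u ∈ Nf i)
    (hv : v ∈ Nf j) : (∑ k, L k) u v = 0 := by
  rw [hL.sum_apply_eq (Or.inl hu)]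
  exact hL i j hij.symm u v (Or.inr hv)

variable {L : I → Matrix V V ℝ}

theorem subBlock_sum_left (hL : HasPrivateInteriors Nf L) (i : I) (Y : Finset V) :
    (∑ j, L j).subBlock (Nf i) Y = (L i).subBlock (Nf i) Y := by
  ext u v
  exact hL.sum_apply_eq (Or.inl u.2)

theorem subBlock_sum_right (hL : HasPrivateInteriors Nf L) (i : I) (X : Finset V) :
    (∑ j, L j).subBlock X (Nf i) = (L i).subBlock X (Nf i) := by
  ext u v
  exact hL.sum_apply_eq (Or.inr v.2)

open Function in
theorem submatrix_subBlock_sum_sigmaEquivBiUnion [DecidableEq V] [DecidableEq I]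
    (hL : HasPrivateInteriors Nf L) (hdisj : Pairwise (Disjoint on Nf)) :
    ((∑ i, L i).subBlock (Finset.univ.biUnion Nf) (Finset.univ.biUnion Nf)).submatrix
        (Finset.sigmaEquivBiUnion Nf hdisj) (Finset.sigmaEquivBiUnion Nf hdisj) =
      blockDiagonal' fun i => (L i).subBlock (Nf i) (Nf i) := by
  ext ⟨i, u⟩ ⟨j, v⟩
  rw [submatrix_apply]
  rcases eq_or_ne i j with rfl | hij
  · rw [blockDiagonal'_apply_eq]
    exact hL.sum_apply_eq (Or.inl u.2)
  · rw [blockDiagonal'_apply_ne _ _ _ hij]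
    exact hL.sum_apply_eq_zero hij u.2 v.2

end HasPrivateInteriors

theorem schur_complement_decomposes_over_regions_general
    {V I : Type*} [Fintype V] [DecidableEq V] [Fintype I] [DecidableEq I]
    (Nf : I → Finset V)
    (hdisj : ∀ i j : I, i ≠ j → Disjoint (Nf i) (Nf j))
    (L : I → Matrix V V ℝ)
    (hzero : ∀ i j : I, j ≠ i → ∀ u v : V, (u ∈ Nf j ∨ v ∈ Nf j) → L i u v = 0)
    (N K : Finset V)
    (hN : N = Finset.univ.biUnion Nf)
    (hinv : ∀ i : I, IsUnit ((L i).subBlock (Nf i) (Nf i)).det) :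
    IsUnit ((∑ i, L i).subBlock N N).det ∧
    (∑ i, L i).subBlock K K -
        (∑ i, L i).subBlock K N * ((∑ i, L i).subBlock N N)⁻¹ * (∑ i, L i).subBlock N K =
      ∑ i, ((L i).subBlock K K -
        (L i).subBlock K (Nf i) * ((L i).subBlock (Nf i) (Nf i))⁻¹ * (L i).subBlock (Nf i) K) := by
  subst hN
  have hL : HasPrivateInteriors Nf L := hzero
  set e := Finset.sigmaEquivBiUnion Nf hdisj
  have hblock := hL.submatrix_subBlock_sum_sigmaEquivBiUnion hdisj
  refine ⟨?_, ?_⟩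
  · rw [← det_submatrix_equiv_self e, hblock]
    exact isUnit_det_blockDiagonal' _ hinv
  · rw [← submatrix_mul_inv_mul_submatrix _ _ _ e, hblock, inv_blockDiagonal' _ hinv,
      mul_blockDiagonal'_mul, subBlock_sum, ← Finset.sum_sub_distrib]
    refine Finset.sum_congr rfl fun i _ => ?_
    rw [← hL.subBlock_sum_right i K, ← hL.subBlock_sum_left i K]
    rfl

theorem schur_complement_decomposes_over_regions
    {V I : Type*} [Fintype V] [DecidableEq V] [Fintype I] [DecidableEq I]
    (Nf : I → Finset V)
    (hdisj : ∀ i j : I, i ≠ j → Disjoint (Nf i) (Nf j))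
    (L : I → Matrix V V ℝ)
    (hzero : ∀ i j : I, j ≠ i → ∀ u v : V, (u ∈ Nf j ∨ v ∈ Nf j) → L i u v = 0)
    (N K : Finset V)
    (hN : N = Finset.univ.biUnion Nf)
    (hK : K = Nᶜ)
    (hinv : ∀ i : I, IsUnit ((L i).subBlock (Nf i) (Nf i)).det) :
    IsUnit ((∑ i, L i).subBlock N N).det ∧
    (∑ i, L i).subBlock K K -
        (∑ i, L i).subBlock K N * ((∑ i, L i).subBlock N N)⁻¹ * (∑ i, L i).subBlock N K =
      ∑ i, ((L i).subBlock K K -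
        (L i).subBlock K (Nf i) * ((L i).subBlock (Nf i) (Nf i))⁻¹ * (L i).subBlock (Nf i) K) :=
  schur_complement_decomposes_over_regions_general Nf hdisj L hzero N K hN hinv
end

section
/- Let V be a finite type, K ⊆ V a terminal set, I a finite index set, q ≥ 1 a real number, and for each i ∈ I let V_i, W_i, K_i ⊆ V be subsets with K_i ⊆ K ∩ V_i ∩ W_i, and let c_i, c̃_i : V → V → ℝ be symmetric nonnegative capacity functions with c_i u v = 0 unless u, v ∈ V_i, and c̃_i u v = 0 unless u, v ∈ W_i. Assume: (a) for all i ≠ j, each of V_i ∩ V_j, V_i ∩ W_j, and W_i ∩ W_j is contained in K; (b) for each i, V_i ∩ K ⊆ K_i and W_i ∩ K ⊆ K_i; and (c) each c̃_i is a q-quality vertex cut sparsifier of c_i with respect to K_i, i.e., for every S_i ⊆ K_i, mincut(c_i, K_i, S_i) ≤ mincut(c̃_i, K_i, S_i) ≤ q · mincut(c_i, K_i, S_i). Let c := ∑_{i∈I} c_i and c̃ := ∑_{i∈I} c̃_i. Then for every S ⊆ K, mincut(c, K, S) ≤ mincut(c̃, K, S) ≤ q · mincut(c, K, S). (Lemma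 5.1 of the paper: the union of q-quality vertex cut sparsifiers of the regions of an edge partition, with regions sharing only terminal vertices, is a q-quality vertex cut sparsifier of the whole graph with respect to the full terminal set K.) -/
open Matrix BigOperators

/-- The capacity of the cut `(U, Uᶜ)` under the capacity function `c`. -/
def cutCap {V : Type*} [Fintype V] [DecidableEq V] (c : V → V → ℝ) (U : Finset V) : ℝ :=
  ∑ u ∈ U, ∑ v ∈ Uᶜ, c u v

/-- The minimum capacity of an `S`-separating cut with respect to the terminal set `K`:
the minimum of `cutCap c U` over all `U` with `U ∩ K = S`. -/
noncomputable def mincut {V : Type*} [Fintype V] [DecidableEq V]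
    (c : V → V → ℝ) (K S : Finset V) : ℝ :=
  sInf { x : ℝ | ∃ U : Finset V, U ∩ K = S ∧ cutCap c U = x }

section Aux
variable {V : Type*} [Fintype V] [DecidableEq V]

variable {V : Type*} [Fintype V] [DecidableEq V]

lemma cutCap_nonneg (c : V → V → ℝ) (h : ∀ u v, 0 ≤ c u v) (U : Finset V) :
    0 ≤ cutCap c U :=
  Finset.sum_nonneg fun u _ => Finset.sum_nonneg fun v _ => h u v

lemma mincutSet_nonempty (c : V → V → ℝ) {K S : Finset V} (hS : S ⊆ K) :
    { x : ℝ | ∃ U : Finset V, U ∩ K = S ∧ cutCap c U = x }.Nonempty :=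
  ⟨cutCap c S, S, Finset.inter_eq_left.mpr hS, rfl⟩

lemma mincutSet_finite (c : V → V → ℝ) (K S : Finset V) :
    { x : ℝ | ∃ U : Finset V, U ∩ K = S ∧ cutCap c U = x }.Finite :=
  (Set.finite_range (cutCap c)).subset (fun x ⟨U, _, h⟩ => ⟨U, h⟩)

lemma mincutSet_bddBelow (c : V → V → ℝ) (h : ∀ u v, 0 ≤ c u v) (K S : Finset V) :
    BddBelow { x : ℝ | ∃ U : Finset V, U ∩ K = S ∧ cutCap c U = x } :=
  ⟨0, fun x ⟨U, _, hU⟩ => hU ▸ cutCap_nonneg c h U⟩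

lemma mincut_le (c : V → V → ℝ) (h : ∀ u v, 0 ≤ c u v) {K S U : Finset V}
    (hU : U ∩ K = S) : mincut c K S ≤ cutCap c U :=
  csInf_le (mincutSet_bddBelow c h K S) ⟨U, hU, rfl⟩

lemma exists_mincut (c : V → V → ℝ) {K S : Finset V} (hS : S ⊆ K) :
    ∃ U : Finset V, U ∩ K = S ∧ cutCap c U = mincut c K S :=
  (mincutSet_nonempty c hS).csInf_mem (mincutSet_finite c K S)

lemma cutCap_restrict (d : V → V → ℝ) (X : Finset V)
    (hsupp : ∀ u v, d u v ≠ 0 → u ∈ X ∧ v ∈ X) (U : Finset V) :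
    cutCap d (U ∩ X) = cutCap d U := by
  unfold cutCap
  have hstep1 : ∀ u ∈ U ∩ X, ∑ v ∈ Uᶜ, d u v = ∑ v ∈ (U ∩ X)ᶜ, d u v := by
    intro u _
    refine Finset.sum_subset (Finset.compl_subset_compl.mpr Finset.inter_subset_left) ?_
    intro v hv hv'
    by_contra h0
    exact (Finset.mem_compl.mp hv) (Finset.mem_inter.mpr ⟨not_not.mp (fun h => hv' (Finset.mem_compl.mpr h)), (hsupp u v h0).2⟩)
  calc ∑ u ∈ U ∩ X, ∑ v ∈ (U ∩ X)ᶜ, d u v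
      = ∑ u ∈ U ∩ X, ∑ v ∈ Uᶜ, d u v := (Finset.sum_congr rfl hstep1).symm
    _ = ∑ u ∈ U, ∑ v ∈ Uᶜ, d u v := by
        refine Finset.sum_subset Finset.inter_subset_left ?_
        intro u hu hu'
        refine Finset.sum_eq_zero fun v _ => ?_
        by_contra h0
        exact hu' (Finset.mem_inter.mpr ⟨hu, (hsupp u v h0).1⟩)

lemma cutCap_sum {I : Type*} [Fintype I] (d : I → V → V → ℝ) (U : Finset V) :
    cutCap (fun u v => ∑ i, d i u v) U = ∑ i, cutCap (d i) U := by
  unfold cutCap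
  calc ∑ u ∈ U, ∑ v ∈ Uᶜ, ∑ i, d i u v
      = ∑ u ∈ U, ∑ i, ∑ v ∈ Uᶜ, d i u v :=
        Finset.sum_congr rfl fun u _ => Finset.sum_comm
    _ = ∑ i, ∑ u ∈ U, ∑ v ∈ Uᶜ, d i u v := Finset.sum_comm

lemma mincut_sum_eq {I : Type*} [Fintype I]
    (K : Finset V) (X Kf : I → Finset V) (d : I → V → V → ℝ)
    (hnonneg : ∀ i u v, 0 ≤ d i u v)
    (hsupp : ∀ i u v, d i u v ≠ 0 → u ∈ X i ∧ v ∈ X i)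
    (hsep : ∀ i j, i ≠ j → X i ∩ X j ⊆ K)
    (hKf : ∀ i, Kf i ⊆ K ∩ X i)
    (hbd : ∀ i, X i ∩ K ⊆ Kf i)
    (S : Finset V) (hS : S ⊆ K) :
    mincut (fun u v => ∑ i, d i u v) K S = ∑ i, mincut (d i) (Kf i) (S ∩ Kf i) := by
  classical
  have hsumnn : ∀ u v, 0 ≤ ∑ i, d i u v := fun u v => Finset.sum_nonneg fun i _ => hnonneg i u v
  apply le_antisymm
  · choose Uf hUf hcap using fun i =>
      exists_mincut (d i) (K := Kf i) (S := S ∩ Kf i) Finset.inter_subset_right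
    set B : Finset V := Finset.univ.biUnion (fun i => (Uf i ∩ X i) \ K) with hB
    set U : Finset V := S ∪ B with hUdef
    have hBK : ∀ a ∈ B, a ∉ K := by
      intro a ha
      rcases Finset.mem_biUnion.mp ha with ⟨i, _, hi⟩
      exact (Finset.mem_sdiff.mp hi).2
    have hUK : U ∩ K = S := by
      ext a
      simp only [hUdef, Finset.mem_inter, Finset.mem_union]
      constructor
      · rintro ⟨h1 | h2, hK⟩
        · exact h1
        · exact absurd hK (hBK a h2)
      · intro hs; exact ⟨Or.inl hs, hS hs⟩
    have hUX : ∀ i, U ∩ X i = Uf i ∩ X i := by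
      intro i
      ext a
      simp only [hUdef, hB, Finset.mem_inter, Finset.mem_union, Finset.mem_biUnion,
        Finset.mem_sdiff, Finset.mem_univ, true_and]
      constructor
      · rintro ⟨hS' | ⟨j, ⟨hUj, hXj⟩, hK⟩, hXi⟩
        · have haK : a ∈ K := hS hS'
          have haKf : a ∈ Kf i := hbd i (Finset.mem_inter.mpr ⟨hXi, haK⟩)
          have hm : a ∈ Uf i ∩ Kf i := by
            rw [hUf i]; exact Finset.mem_inter.mpr ⟨hS', haKf⟩
          exact ⟨(Finset.mem_inter.mp hm).1, hXi⟩
        · by_cases hij : j = i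
          · subst hij; exact ⟨hUj, hXi⟩
          · exact absurd (hsep j i hij (Finset.mem_inter.mpr ⟨hXj, hXi⟩)) hK
      · rintro ⟨hUi, hXi⟩
        by_cases haK : a ∈ K
        · have haKf : a ∈ Kf i := hbd i (Finset.mem_inter.mpr ⟨hXi, haK⟩)
          have hm : a ∈ S ∩ Kf i := by
            rw [← hUf i]; exact Finset.mem_inter.mpr ⟨hUi, haKf⟩
          exact ⟨Or.inl (Finset.mem_inter.mp hm).1, hXi⟩
        · exact ⟨Or.inr ⟨i, ⟨hUi, hXi⟩, haK⟩, hXi⟩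
    calc mincut (fun u v => ∑ i, d i u v) K S ≤ cutCap (fun u v => ∑ i, d i u v) U :=
          mincut_le _ hsumnn hUK
      _ = ∑ i, cutCap (d i) U := cutCap_sum d U
      _ = ∑ i, mincut (d i) (Kf i) (S ∩ Kf i) := by
          refine Finset.sum_congr rfl fun i _ => ?_
          rw [← cutCap_restrict (d i) (X i) (hsupp i) U, hUX i,
            cutCap_restrict (d i) (X i) (hsupp i) (Uf i), hcap i]
  · refine le_csInf (mincutSet_nonempty _ hS) ?_
    rintro x ⟨U, hUK, rfl⟩
    rw [cutCap_sum]
    refine Finset.sum_le_sum fun i _ => ?_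
    rw [← cutCap_restrict (d i) (X i) (hsupp i) U]
    refine mincut_le (d i) (hnonneg i) ?_
    have h1 : Kf i ⊆ X i := fun a ha => (Finset.mem_inter.mp (hKf i ha)).2
    have h2 : Kf i ⊆ K := fun a ha => (Finset.mem_inter.mp (hKf i ha)).1
    ext a
    simp only [Finset.mem_inter]
    constructor
    · rintro ⟨⟨hU, _⟩, hKfi⟩
      have hm : a ∈ U ∩ K := Finset.mem_inter.mpr ⟨hU, h2 hKfi⟩
      rw [hUK] at hm
      exact ⟨hm, hKfi⟩
    · rintro ⟨hSa, hKfi⟩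
      have hm : a ∈ U ∩ K := by rw [hUK]; exact hSa
      exact ⟨⟨(Finset.mem_inter.mp hm).1, h1 hKfi⟩, hKfi⟩

end Aux

theorem cut_sparsifier_union
    {V I : Type*} [Fintype V] [DecidableEq V] [Fintype I]
    (K : Finset V) (q : ℝ) (hq : 1 ≤ q)
    (Vf Wf Kf : I → Finset V)
    (hKf : ∀ i : I, Kf i ⊆ K ∩ Vf i ∩ Wf i)
    (c ctil : I → V → V → ℝ)
    (hcsymm : ∀ i u v, c i u v = c i v u)
    (hcnonneg : ∀ i u v, 0 ≤ c i u v)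
    (hctsymm : ∀ i u v, ctil i u v = ctil i v u)
    (hctnonneg : ∀ i u v, 0 ≤ ctil i u v)
    (hcsupp : ∀ i u v, c i u v ≠ 0 → u ∈ Vf i ∧ v ∈ Vf i)
    (hctsupp : ∀ i u v, ctil i u v ≠ 0 → u ∈ Wf i ∧ v ∈ Wf i)
    (hshare : ∀ i j : I, i ≠ j →
      Vf i ∩ Vf j ⊆ K ∧ Vf i ∩ Wf j ⊆ K ∧ Wf i ∩ Wf j ⊆ K)
    (hbound : ∀ i : I, Vf i ∩ K ⊆ Kf i ∧ Wf i ∩ K ⊆ Kf i)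
    (hquality : ∀ i : I, ∀ S_i : Finset V, S_i ⊆ Kf i →
      mincut (c i) (Kf i) S_i ≤ mincut (ctil i) (Kf i) S_i ∧
      mincut (ctil i) (Kf i) S_i ≤ q * mincut (c i) (Kf i) S_i) :
    ∀ S : Finset V, S ⊆ K →
      mincut (fun u v => ∑ i, c i u v) K S ≤ mincut (fun u v => ∑ i, ctil i u v) K S ∧
      mincut (fun u v => ∑ i, ctil i u v) K S ≤ q * mincut (fun u v => ∑ i, c i u v) K S := by
  intro S hS
  have hKfV : ∀ i, Kf i ⊆ K ∩ Vf i := fun i a ha => by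
    have h := hKf i ha
    simp only [Finset.mem_inter] at h ⊢
    exact ⟨h.1.1, h.1.2⟩
  have hKfW : ∀ i, Kf i ⊆ K ∩ Wf i := fun i a ha => by
    have h := hKf i ha
    simp only [Finset.mem_inter] at h ⊢
    exact ⟨h.1.1, h.2⟩
  have hA : mincut (fun u v => ∑ i, c i u v) K S = ∑ i, mincut (c i) (Kf i) (S ∩ Kf i) :=
    mincut_sum_eq K Vf Kf c hcnonneg hcsupp (fun i j hij => (hshare i j hij).1)
      hKfV (fun i => (hbound i).1) S hS
  have hB : mincut (fun u v => ∑ i, ctil i u v) K S = ∑ i, mincut (ctil i) (Kf i) (S ∩ Kf i) :=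
    mincut_sum_eq K Wf Kf ctil hctnonneg hctsupp (fun i j hij => (hshare i j hij).2.2)
      hKfW (fun i => (hbound i).2) S hS
  rw [hA, hB]
  constructor
  · exact Finset.sum_le_sum fun i _ => (hquality i _ Finset.inter_subset_right).1
  · rw [Finset.mul_sum]
    exact Finset.sum_le_sum fun i _ => (hquality i _ Finset.inter_subset_right).2
end

section
/- Let V be a finite type, let w : V → V → ℝ≥0∞ be a symmetric weight function, and let v ∈ V. Define the weight function w' on the subtype {x : V // x ≠ v} by w' a b := min (w a b) (w a v + w v b). Then for all s, t in the subtype {x : V // x ≠ v}, the walk distance d_{w'}(s, t) computed in the eliminated graph on {x // x ≠ v} equals the walk distance d_w(s, t) computed in the original graph on V. (Vertex elimination preserves shortest-path distances: replacing a non-terminal vertex v by a clique on its neighbors with weights w(a,v) + w(v,b), keeping only the cheaper of parallel edges, does not change any distance between the remaining vertices; this is the elimination step used in the construction of vertex distance sparsifiers in Lemma 6.1 of the paper.) -/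
open BigOperators
open scoped ENNReal

/-- The walk distance from `s` to `t` with respect to the symmetric weight function `w`:
the infimum over all walks `s = v₀, v₁, …, v_k = t` of the total weight of the walk. -/
noncomputable def walkDist {V : Type*} (w : V → V → ℝ≥0∞) (s t : V) : ℝ≥0∞ :=
  ⨅ (k : ℕ) (p : Fin (k + 1) → V) (_ : p 0 = s) (_ : p (Fin.last k) = t),
    ∑ i : Fin k, w (p i.castSucc) (p i.succ)

/-
Distances to a fixed target `t` are characterised by potentials: every `g` with `g t = 0` and
`g a ≤ u a b + g b` for all `a b` lies below `walkDist u · t` (induction along a walk), and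
`walkDist u · t` is itself such a `g`. The original distance, restricted to `{x // x ≠ v}`, is a
potential for the eliminated weights, because the new edge weight `w a v + w v b` is the cost of a
two-step walk through `v`. Conversely, the eliminated distance `d'` becomes a potential for `w` on
all of `V` once `v` is assigned the value `⨅ c, w v c + d' c t`.
-/

section walkDist

variable {V : Type*} (u : V → V → ℝ≥0∞)

theorem walkDist_le_sum {s t : V} (k : ℕ) (p : Fin (k + 1) → V) (h0 : p 0 = s)
    (hk : p (Fin.last k) = t) :
    walkDist u s t ≤ ∑ i : Fin k, u (p i.castSucc) (p i.succ) :=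
  iInf_le_of_le k <| iInf_le_of_le p <| iInf_le_of_le h0 <| iInf_le_of_le hk le_rfl

theorem walkDist_self (s : V) : walkDist u s s = 0 :=
  nonpos_iff_eq_zero.mp <| by simpa using walkDist_le_sum u 0 (fun _ => s) rfl rfl

theorem walkDist_le_add_walkDist (a b c : V) : walkDist u a c ≤ u a b + walkDist u b c := by
  simp only [walkDist, ENNReal.add_iInf]
  refine le_iInf fun k => le_iInf fun p => le_iInf fun h0 => le_iInf fun hk => ?_
  calc walkDist u a c ≤ ∑ i : Fin (k + 1), u ((Fin.cons a p : Fin (k + 2) → V) i.castSucc)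
        ((Fin.cons a p : Fin (k + 2) → V) i.succ) :=
        walkDist_le_sum u (k + 1) _ rfl (by simpa [← Fin.succ_last] using hk)
    _ = u a b + ∑ i : Fin k, u (p i.castSucc) (p i.succ) := by
        simp [Fin.sum_univ_succ, h0]

variable {u}

theorem le_walkDist_of_forall_le_add {g : V → ℝ≥0∞} {t : V} (ht : g t = 0)
    (hg : ∀ a b, g a ≤ u a b + g b) (s : V) : g s ≤ walkDist u s t := by
  refine le_iInf fun k => le_iInf fun p => le_iInf fun h0 => le_iInf fun hk => ?_
  subst h0 hk
  induction k with
  | zero => simpa using ht.le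
  | succ k ih =>
    calc g (p 0) ≤ u (p 0) (p 1) + g (p 1) := hg _ _
      _ ≤ u (p 0) (p 1) + ∑ i : Fin k, u (p i.succ.castSucc) (p i.succ.succ) := by
        gcongr
        simpa using ih (fun i => p i.succ) (by simpa [Fin.succ_last] using ht)
      _ = ∑ i : Fin (k + 1), u (p i.castSucc) (p i.succ) := by
        simp [Fin.sum_univ_succ]

end walkDist

section elimination

variable {V : Type*} (w : V → V → ℝ≥0∞) (v : V)

def elimWeight (a b : {x : V // x ≠ v}) : ℝ≥0∞ := min (w a b) (w a v + w v b)

theorem walkDist_le_walkDist_elimWeight (s t : {x : V // x ≠ v}) :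
    walkDist w s t ≤ walkDist (elimWeight w v) s t := by
  refine le_walkDist_of_forall_le_add (g := fun x : {x : V // x ≠ v} => walkDist w x t)
    (walkDist_self w _) (fun a b => ?_) s
  rw [elimWeight, ← min_add_add_right]
  refine le_min (walkDist_le_add_walkDist w _ _ _) ?_
  calc walkDist w a t ≤ w a v + walkDist w v t := walkDist_le_add_walkDist w _ _ _
    _ ≤ w a v + (w v b + walkDist w b t) := by gcongr; exact walkDist_le_add_walkDist w _ _ _
    _ = w a v + w v b + walkDist w b t := (add_assoc _ _ _).symm

theorem walkDist_elimWeight_le_walkDist (s t : {x : V // x ≠ v}) :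
    walkDist (elimWeight w v) s t ≤ walkDist w s t := by
  classical
  let d := fun x => walkDist (elimWeight w v) x t
  let g : V → ℝ≥0∞ := fun x =>
    if h : x = v then ⨅ c : {x : V // x ≠ v}, w v c + d c else d ⟨x, h⟩
  have hg : ∀ a b, g a ≤ w a b + g b := by
    intro a b
    by_cases ha : a = v <;> by_cases hb : b = v
    · simp only [g, dif_pos ha, dif_pos hb, le_add_self]
    · simp only [g, dif_neg hb, ha, dite_true]
      exact iInf_le_of_le ⟨b, hb⟩ le_rfl
    · simp only [g, dif_neg ha, hb, dite_true, ENNReal.add_iInf]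
      refine le_iInf fun c => ?_
      calc d ⟨a, ha⟩ ≤ elimWeight w v ⟨a, ha⟩ c + d c := walkDist_le_add_walkDist _ _ _ _
        _ ≤ w a v + w v c + d c := by gcongr; exact min_le_right _ _
        _ = w a v + (w v c + d c) := add_assoc _ _ _
    · simp only [g, dif_neg ha, dif_neg hb]
      calc d ⟨a, ha⟩ ≤ elimWeight w v ⟨a, ha⟩ ⟨b, hb⟩ + d ⟨b, hb⟩ :=
            walkDist_le_add_walkDist _ _ _ _
        _ ≤ w a b + d ⟨b, hb⟩ := by gcongr; exact min_le_left _ _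
  have ht : g t = 0 := by simp only [g, dif_neg t.2, d, walkDist_self]
  simpa [g, dif_neg s.2] using le_walkDist_of_forall_le_add ht hg s

end elimination

theorem vertex_elimination_preserves_distances_general
    {V : Type*} (w : V → V → ℝ≥0∞) (v : V) :
    ∀ s t : {x : V // x ≠ v},
      walkDist (fun a b : {x : V // x ≠ v} =>
          min (w (a : V) (b : V)) (w (a : V) v + w v (b : V))) s t =
        walkDist w (s : V) (t : V) := fun s t =>
  le_antisymm (walkDist_elimWeight_le_walkDist w v s t) (walkDist_le_walkDist_elimWeight w v s t)

theorem vertex_elimination_preserves_distances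
    {V : Type*} [Fintype V] (w : V → V → ℝ≥0∞)
    (hsymm : ∀ a b : V, w a b = w b a) (v : V) :
    ∀ s t : {x : V // x ≠ v},
      walkDist (fun a b : {x : V // x ≠ v} =>
          min (w (a : V) (b : V)) (w (a : V) v + w v (b : V))) s t =
        walkDist w (s : V) (t : V) :=
  vertex_elimination_preserves_distances_general w v
end
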